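/- Let H be a complex Hilbert space, let m be a finite positive Borel measure on (0,∞) with γ := ∫_{(0,∞)} (1+t) dm(t) < ∞, let A ∈ B(H) be positive invertible, let P ∈ B(H) be an orthogonal projection, and let δ > 0. Then the Bochner integrals ∫_{(0,∞)} (1+t)/t · ( tA : (sP + sδI) ) dm(t) converge in operator norm to γ·A as s → ∞. -/

import Mathlib

open scoped ENNReal Topology
open Filter MeasureTheory

set_option maxHeartbeats 1000000
set_option synthInstance.maxHeartbeats 1000000

/-- Parallel sum of operators: `X : Y = (X⁻¹ + Y⁻¹)⁻¹`. -/
noncomputable def parallelSum {H : Type} [NormedAddCommGroup H] [InnerProductSpace ℂ H]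
    [CompleteSpace H] (X Y : H →L[ℂ] H) : H →L[ℂ] H :=
  Ring.inverse (Ring.inverse X + Ring.inverse Y)

section Aux

variable {H : Type} [NormedAddCommGroup H] [InnerProductSpace ℂ H] [CompleteSpace H]

lemma aux_smul_nonneg {A : H →L[ℂ] H} (hA : 0 ≤ A) {t : ℝ} (ht : 0 ≤ t) :
    0 ≤ t • A := smul_nonneg ht hA

lemma aux_one_nonneg : (0 : H →L[ℂ] H) ≤ 1 := by
  rw [ContinuousLinearMap.nonneg_iff_isPositive]
  exact ContinuousLinearMap.isPositive_one

lemma aux_isUnit_smul {A : H →L[ℂ] H} (hA : IsUnit A) {c : ℝ} (hc : c ≠ 0) :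
    IsUnit (c • A) ∧ Ring.inverse (c • A) = c⁻¹ • Ring.inverse A := by
  have h1 : (c • A) * (c⁻¹ • (↑hA.unit⁻¹ : H →L[ℂ] H)) = 1 := by
    rw [smul_mul_smul_comm, mul_inv_cancel₀ hc, IsUnit.mul_val_inv, one_smul]
  have h2 : (c⁻¹ • (↑hA.unit⁻¹ : H →L[ℂ] H)) * (c • A) = 1 := by
    rw [smul_mul_smul_comm, inv_mul_cancel₀ hc, IsUnit.val_inv_mul, one_smul]
  let w : (H →L[ℂ] H)ˣ := ⟨c • A, c⁻¹ • (↑hA.unit⁻¹ : H →L[ℂ] H), h1, h2⟩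
  refine ⟨w.isUnit, ?_⟩
  have : Ring.inverse (c • A) = ↑w⁻¹ := Ring.inverse_unit w
  rw [this]
  show c⁻¹ • (↑hA.unit⁻¹ : H →L[ℂ] H) = c⁻¹ • Ring.inverse A
  congr 1
  have h3 : Ring.inverse (↑hA.unit : H →L[ℂ] H) = ↑hA.unit⁻¹ := Ring.inverse_unit _
  rw [hA.unit_spec] at h3
  exact h3.symm

lemma aux_parallel {X Y : H →L[ℂ] H} (hX : 0 ≤ X) (hXu : IsUnit X)
    (hY : 0 ≤ Y) (hYu : IsUnit Y) :
    IsUnit (Ring.inverse X + Ring.inverse Y) ∧ 0 ≤ parallelSum X Y ∧ parallelSum X Y ≤ X := by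
  obtain ⟨u, rfl⟩ := hXu
  obtain ⟨v, rfl⟩ := hYu
  have h1 : (0 : H →L[ℂ] H) ≤ ↑u⁻¹ := CFC.inv_nonneg_of_nonneg u hX
  have h2 : (0 : H →L[ℂ] H) ≤ ↑v⁻¹ := CFC.inv_nonneg_of_nonneg v hY
  have hle : (↑u⁻¹ : H →L[ℂ] H) ≤ ↑u⁻¹ + ↑v⁻¹ := le_add_of_nonneg_right h2
  have hZu : IsUnit ((↑u⁻¹ : H →L[ℂ] H) + ↑v⁻¹) :=
    CStarAlgebra.isUnit_of_le _ hle (u⁻¹.isUnit.isStrictlyPositive h1)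
  have hru : Ring.inverse (↑u : H →L[ℂ] H) = ↑u⁻¹ := Ring.inverse_unit u
  have hrv : Ring.inverse (↑v : H →L[ℂ] H) = ↑v⁻¹ := Ring.inverse_unit v
  refine ⟨by rw [hru, hrv]; exact hZu, ?_, ?_⟩
  · rw [parallelSum, hru, hrv, ← hZu.unit_spec, Ring.inverse_unit]
    exact CFC.inv_nonneg_of_nonneg hZu.unit (by rw [hZu.unit_spec]; exact add_nonneg h1 h2)
  · rw [parallelSum, hru, hrv, ← hZu.unit_spec, Ring.inverse_unit]
    have := CStarAlgebra.inv_le_inv (a := u⁻¹) (b := hZu.unit) h1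
      (by rw [hZu.unit_spec]; exact hle)
    simpa using this

end Aux

/-- Let `m` be a finite positive Borel measure on `(0,∞)` with `γ = ∫ (1+t) dm(t) < ∞`, `A`
positive invertible, `P` an orthogonal projection, `δ > 0`. Then
`∫ (1+t)/t · (tA : (sP + sδI)) dm(t) → γ·A` in operator norm as `s → ∞`. -/
theorem stmt12 (H : Type) [NormedAddCommGroup H] [InnerProductSpace ℂ H] [CompleteSpace H]
    (m : Measure ℝ) [IsFiniteMeasure m] (hm_supp : m (Set.Ioi (0:ℝ))ᶜ = 0)
    (hint : IntegrableOn (fun t : ℝ => 1 + t) (Set.Ioi 0) m)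
    (A : H →L[ℂ] H) (hA : 0 ≤ A) (hAu : IsUnit A)
    (P : H →L[ℂ] H) (hP : IsSelfAdjoint P) (hP2 : IsIdempotentElem P)
    (δ : ℝ) (hδ : 0 < δ) :
    Tendsto
      (fun s : ℝ => ∫ t in Set.Ioi (0:ℝ),
        ((1 + t) / t) • parallelSum (t • A) (s • P + (s * δ) • (1 : H →L[ℂ] H)) ∂m)
      atTop (𝓝 ((∫ t in Set.Ioi (0:ℝ), (1 + t) ∂m) • A)) := by
  set B : H →L[ℂ] H := P + δ • 1 with hB
  have hPn : (0 : H →L[ℂ] H) ≤ P := by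
    have : star P * P = P := by rw [hP.star_eq, hP2]
    exact this ▸ star_mul_self_nonneg P
  have hBn : (0 : H →L[ℂ] H) ≤ B :=
    add_nonneg hPn (aux_smul_nonneg aux_one_nonneg hδ.le)
  have hIu : IsUnit (δ • (1 : H →L[ℂ] H)) :=
    (aux_isUnit_smul isUnit_one hδ.ne').1
  have hBu : IsUnit B :=
    CStarAlgebra.isUnit_of_le _ (le_add_of_nonneg_left hPn)
      (hIu.isStrictlyPositive (aux_smul_nonneg aux_one_nonneg hδ.le))
  have hBs : ∀ s : ℝ, s • P + (s * δ) • (1 : H →L[ℂ] H) = s • B := by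
    intro s; rw [hB, smul_add, smul_smul]
  -- facts for t > 0, s > 0
  have htA : ∀ t : ℝ, t ∈ Set.Ioi (0:ℝ) → 0 ≤ t • A ∧ IsUnit (t • A) := fun t ht =>
    ⟨aux_smul_nonneg hA (le_of_lt ht), (aux_isUnit_smul hAu (ne_of_gt ht)).1⟩
  have hsB : ∀ s : ℝ, 0 < s → 0 ≤ s • B ∧ IsUnit (s • B) := fun s hs =>
    ⟨aux_smul_nonneg hBn hs.le, (aux_isUnit_smul hBu hs.ne').1⟩
  -- dominated convergence
  have key := MeasureTheory.tendsto_integral_filter_of_dominated_convergence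
    (μ := m.restrict (Set.Ioi 0))
    (F := fun (s : ℝ) (t : ℝ) =>
      ((1 + t) / t) • parallelSum (t • A) (s • P + (s * δ) • (1 : H →L[ℂ] H)))
    (f := fun t : ℝ => (1 + t) • A)
    (l := atTop)
    (bound := fun t : ℝ => (1 + t) * ‖A‖)
    ?_ ?_ ?_ ?_
  · rw [integral_smul_const] at key
    exact key
  · -- measurability
    filter_upwards [eventually_gt_atTop (0:ℝ)] with s hs
    apply ContinuousOn.aestronglyMeasurable _ measurableSet_Ioi
    apply ContinuousOn.fun_smul
    · exact (continuousOn_const.add continuousOn_id).div continuousOn_id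
        fun x hx => ne_of_gt hx
    · intro t ht
      apply ContinuousAt.continuousWithinAt
      rw [hBs]
      have h1 := htA t ht
      have h2 := hsB s hs
      have h3 := aux_parallel h1.1 h1.2 h2.1 h2.2
      unfold parallelSum
      have e1 : ContinuousAt (fun u : ℝ => u • A) t := continuousAt_id.smul continuousAt_const
      have e2 : ContinuousAt (Ring.inverse : (H →L[ℂ] H) → _) (t • A) := by
        have := NormedRing.inverse_continuousAt h1.2.unit
        rwa [h1.2.unit_spec] at this
      have e4 : ContinuousAt
          (fun u : ℝ => Ring.inverse (u • A) + Ring.inverse (s • B)) t :=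
        (ContinuousAt.comp (x := t) e2 e1).add continuousAt_const
      have e5 : ContinuousAt (Ring.inverse : (H →L[ℂ] H) → _)
          (Ring.inverse (t • A) + Ring.inverse (s • B)) := by
        have := NormedRing.inverse_continuousAt h3.1.unit
        rwa [h3.1.unit_spec] at this
      exact ContinuousAt.comp (x := t) e5 e4
  · -- bound
    filter_upwards [eventually_gt_atTop (0:ℝ)] with s hs
    filter_upwards [ae_restrict_mem measurableSet_Ioi] with t ht
    have h1 := htA t ht
    have h2 := hsB s hs
    have h3 := aux_parallel h1.1 h1.2 h2.1 h2.2
    rw [hBs]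
    rw [norm_smul]
    have htpos : (0:ℝ) < t := ht
    have hnorm : ‖parallelSum (t • A) (s • B)‖ ≤ ‖t • A‖ :=
      CStarAlgebra.norm_le_norm_of_nonneg_of_le h3.2.1 h3.2.2
    have h1t : (0:ℝ) ≤ 1 + t := by linarith
    calc ‖(1 + t) / t‖ * ‖parallelSum (t • A) (s • B)‖
        ≤ ‖(1 + t) / t‖ * ‖t • A‖ := by
          exact mul_le_mul_of_nonneg_left hnorm (norm_nonneg _)
      _ = ((1 + t) / t) * (t * ‖A‖) := by
          rw [norm_smul, Real.norm_eq_abs, Real.norm_eq_abs,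
            abs_of_nonneg (div_nonneg h1t htpos.le), abs_of_pos htpos]
      _ = (1 + t) * ‖A‖ := by field_simp
  · exact hint.mul_const ‖A‖
  · -- pointwise limit
    filter_upwards [ae_restrict_mem measurableSet_Ioi] with t ht
    have htpos : (0:ℝ) < t := ht
    have h1 := htA t ht
    -- limit function via continuity at 0
    have hinvA : Ring.inverse (Ring.inverse (t • A)) = t • A := by
      rw [← h1.2.unit_spec, Ring.inverse_unit, Ring.inverse_unit, inv_inv]
    have hG0 : ContinuousAt
        (fun C : H →L[ℂ] H => Ring.inverse (Ring.inverse (t • A) + C)) 0 := by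
      have hu : IsUnit (Ring.inverse (t • A) + 0) := by
        rw [add_zero, ← h1.2.unit_spec, Ring.inverse_unit]
        exact (h1.2.unit⁻¹).isUnit
      have e5 : ContinuousAt (Ring.inverse : (H →L[ℂ] H) → _)
          (Ring.inverse (t • A) + 0) := by
        have := NormedRing.inverse_continuousAt hu.unit
        rwa [hu.unit_spec] at this
      exact ContinuousAt.comp (x := (0 : H →L[ℂ] H)) e5
        (continuousAt_const.add continuousAt_id)
    have hG : ContinuousAt
        (fun C : H →L[ℂ] H => ((1 + t) / t) • Ring.inverse (Ring.inverse (t • A) + C)) 0 :=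
      hG0.const_smul ((1 + t) / t)
    have hlim0 : Tendsto (fun s : ℝ => s⁻¹ • Ring.inverse B) atTop
        (𝓝 (0 : H →L[ℂ] H)) := by
      have h0 := (tendsto_inv_atTop_zero :
        Tendsto (fun s : ℝ => s⁻¹) atTop (𝓝 0)).smul_const (Ring.inverse B)
      rwa [zero_smul] at h0
    have hcomp := (hG.tendsto).comp hlim0
    have heq : (fun s : ℝ => ((1 + t) / t) •
        Ring.inverse (Ring.inverse (t • A) + s⁻¹ • Ring.inverse B)) =ᶠ[atTop]
        (fun s : ℝ => ((1 + t) / t) •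
          parallelSum (t • A) (s • P + (s * δ) • (1 : H →L[ℂ] H))) := by
      filter_upwards [eventually_gt_atTop (0:ℝ)] with s hs
      rw [hBs, parallelSum, (aux_isUnit_smul hBu hs.ne').2]
    have hval : ((1 + t) / t) • Ring.inverse (Ring.inverse (t • A) + 0) = (1 + t) • A := by
      rw [add_zero, hinvA, smul_smul, div_mul_cancel₀ _ htpos.ne']
    rw [← hval]
    exact Tendsto.congr' heq hcomp
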